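/- arXiv:2408.04202 — 4 statements merged into one kernel-verified Lean document; each statement's English description precedes it below -/
import Mathlib

section
/- Let L be the symmetric Laplacian of a connected undirected weighted graph on N nodes with algebraic connectivity λ₂ = min{zᵀLz : z ⊥ 𝟙, ‖z‖ = 1}, and let γ1, γ2, V1, V2 > 0 and ℓ1, ℓ2 be Lipschitz constants of g1, g2 : ℝ → ℝ. If V1·ℓ1·V2·ℓ2 / ((γ1 + λ₂)·γ2) < 1, then every solution X̄1 ∈ ℝᴺ of the equilibrium equation (γ1·I + L)·X̄1 = G̃(X̄1), where G̃(X)_i = V1·g2((V2/γ2)·g1(X_i)), lies in span{𝟙}. -/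
open Matrix Fintype
open scoped BigOperators

/-!
Write `X = z + α𝟙` with `α` the mean of `X`, so that `z ⊥ 𝟙` and `L z = L X`. Pairing the
equilibrium equation with `z` gives `γ1 ‖z‖² + zᵀ L z = zᵀ (G̃(X) - G̃(α𝟙))`, where `G̃(α𝟙)` may be
subtracted because it is a multiple of `𝟙`. The left side is at least `(γ1 + λ₂) ‖z‖²` by the
variational definition of `λ₂`, the right side at most `k ‖z‖²` with `k` the Lipschitz constant of
`G̃`, so `k < γ1 + λ₂` forces `z = 0`.
-/

theorem sInf_rayleigh_mul_dotProduct_self_le {ι : Type*} [Fintype ι] {L : Matrix ι ι ℝ}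
    (hpsd : ∀ v : ι → ℝ, 0 ≤ v ⬝ᵥ (L *ᵥ v)) {u z : ι → ℝ} (hz : z ⬝ᵥ u = 0) :
    sInf {r : ℝ | ∃ w : ι → ℝ, w ⬝ᵥ u = 0 ∧ w ⬝ᵥ w = 1 ∧ r = w ⬝ᵥ (L *ᵥ w)} * (z ⬝ᵥ z) ≤
      z ⬝ᵥ (L *ᵥ z) := by
  rcases eq_or_ne z 0 with rfl | hz0
  · simp
  have hA : 0 < z ⬝ᵥ z :=
    (dotProduct_star_self_nonneg z).lt_of_ne (Ne.symm (dotProduct_self_eq_zero.not.mpr hz0))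
  have hs : √(z ⬝ᵥ z) ^ 2 = z ⬝ᵥ z := Real.sq_sqrt hA.le
  have hs0 : √(z ⬝ᵥ z) ≠ 0 := (Real.sqrt_pos.mpr hA).ne'
  have hbdd : BddBelow {r : ℝ | ∃ w : ι → ℝ, w ⬝ᵥ u = 0 ∧ w ⬝ᵥ w = 1 ∧ r = w ⬝ᵥ (L *ᵥ w)} :=
    ⟨0, by rintro r ⟨w, -, -, rfl⟩; exact hpsd w⟩
  rw [← le_div_iff₀ hA]
  refine csInf_le hbdd ⟨(√(z ⬝ᵥ z))⁻¹ • z, ?_, ?_, ?_⟩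
  · rw [smul_dotProduct, hz, smul_zero]
  · simp only [smul_dotProduct, dotProduct_smul, smul_eq_mul]
    field_simp
    exact hs.symm
  · simp only [smul_dotProduct, mulVec_smul, dotProduct_smul, smul_eq_mul]
    field_simp
    rw [hs]

theorem abs_mul_comp_mul_comp_sub_le {g1 g2 : ℝ → ℝ} {a b ℓ1 ℓ2 : ℝ} (ha : 0 ≤ a) (hb : 0 ≤ b)
    (hℓ2 : 0 ≤ ℓ2) (hg1 : ∀ x y, |g1 x - g1 y| ≤ ℓ1 * |x - y|)
    (hg2 : ∀ x y, |g2 x - g2 y| ≤ ℓ2 * |x - y|) (x y : ℝ) :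
    |a * g2 (b * g1 x) - a * g2 (b * g1 y)| ≤ a * ℓ1 * b * ℓ2 * |x - y| :=
  calc |a * g2 (b * g1 x) - a * g2 (b * g1 y)|
      = a * |g2 (b * g1 x) - g2 (b * g1 y)| := by rw [← mul_sub, abs_mul, abs_of_nonneg ha]
    _ ≤ a * (ℓ2 * (b * |g1 x - g1 y|)) := by
        gcongr
        simpa only [← mul_sub, abs_mul, abs_of_nonneg hb] using hg2 (b * g1 x) (b * g1 y)
    _ ≤ a * (ℓ2 * (b * (ℓ1 * |x - y|))) := by gcongr; exact hg1 x y
    _ = a * ℓ1 * b * ℓ2 * |x - y| := by ring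

section Balance

variable {ι : Type*} [Fintype ι]

theorem balance_dotProduct_one (X : ι → ℝ) : balance X ⬝ᵥ (fun _ => (1 : ℝ)) = 0 := by
  simp [dotProduct]

theorem balance_dotProduct_comp_le {F : ℝ → ℝ} {k : ℝ} (hF : ∀ x y, |F x - F y| ≤ k * |x - y|)
    (X : ι → ℝ) : balance X ⬝ᵥ (fun i => F (X i)) ≤ k * (balance X ⬝ᵥ balance X) := by
  set α := 𝔼 i, X i
  have hshift : balance X ⬝ᵥ (fun i => F (X i)) = ∑ i, balance X i * (F (X i) - F α) := by
    simp only [dotProduct, mul_sub, Finset.sum_sub_distrib, ← Finset.sum_mul, sum_balance,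
      zero_mul, sub_zero]
  rw [hshift, dotProduct, Finset.mul_sum]
  refine Finset.sum_le_sum fun i _ => ?_
  calc balance X i * (F (X i) - F α) ≤ |balance X i| * |F (X i) - F α| := by
        rw [← abs_mul]; exact le_abs_self _
    _ ≤ |balance X i| * (k * |balance X i|) := by gcongr; exact hF (X i) α
    _ = k * (balance X i * balance X i) := by rw [mul_left_comm, abs_mul_abs_self]

theorem balance_dotProduct_mulVec [DecidableEq ι] {L : Matrix ι ι ℝ}
    (hL : L *ᵥ (fun _ => (1 : ℝ)) = 0) (γ : ℝ) (X : ι → ℝ) :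
    balance X ⬝ᵥ ((γ • (1 : Matrix ι ι ℝ) + L) *ᵥ X) =
      γ * (balance X ⬝ᵥ balance X) + balance X ⬝ᵥ (L *ᵥ balance X) := by
  have hX : X = balance X + (𝔼 i, X i) • fun _ => (1 : ℝ) := by
    ext i; simp [balance_apply]
  calc balance X ⬝ᵥ ((γ • (1 : Matrix ι ι ℝ) + L) *ᵥ X)
      = balance X ⬝ᵥ ((γ • (1 : Matrix ι ι ℝ) + L) *ᵥ
          (balance X + (𝔼 i, X i) • fun _ => (1 : ℝ))) := by rw [← hX]
    _ = γ * (balance X ⬝ᵥ balance X) + balance X ⬝ᵥ (L *ᵥ balance X) := by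
      simp only [add_mulVec, smul_mulVec, one_mulVec, mulVec_add, mulVec_smul, hL, add_zero,
        dotProduct_add, dotProduct_smul, balance_dotProduct_one, smul_eq_mul]
      ring

theorem exists_eq_const_of_lipschitz_lt_add [DecidableEq ι] {L : Matrix ι ι ℝ}
    (hL : L *ᵥ (fun _ => (1 : ℝ)) = 0) {μ : ℝ}
    (hμ : ∀ z : ι → ℝ, z ⬝ᵥ (fun _ => (1 : ℝ)) = 0 → μ * (z ⬝ᵥ z) ≤ z ⬝ᵥ (L *ᵥ z))
    {F : ℝ → ℝ} {k γ : ℝ} (hF : ∀ x y, |F x - F y| ≤ k * |x - y|) (hk : k < γ + μ)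
    {X : ι → ℝ} (heq : (γ • (1 : Matrix ι ι ℝ) + L) *ᵥ X = fun i => F (X i)) :
    ∃ c : ℝ, X = fun _ => c := by
  have hle : (γ + μ) * (balance X ⬝ᵥ balance X) ≤ k * (balance X ⬝ᵥ balance X) :=
    calc (γ + μ) * (balance X ⬝ᵥ balance X)
        ≤ γ * (balance X ⬝ᵥ balance X) + balance X ⬝ᵥ (L *ᵥ balance X) := by
          linarith [hμ _ (balance_dotProduct_one X)]
      _ = balance X ⬝ᵥ (fun i => F (X i)) := by rw [← balance_dotProduct_mulVec hL, heq]
      _ ≤ k * (balance X ⬝ᵥ balance X) := balance_dotProduct_comp_le hF X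
  have hnonneg : 0 ≤ balance X ⬝ᵥ balance X := dotProduct_star_self_nonneg _
  have hself : balance X ⬝ᵥ balance X = 0 := by nlinarith
  refine ⟨𝔼 i, X i, funext fun i => ?_⟩
  simpa [balance_apply, sub_eq_zero] using congrFun (dotProduct_self_eq_zero.mp hself) i

end Balance

theorem stmt_9_general (N : ℕ) (L : Matrix (Fin N) (Fin N) ℝ)
    (hones : L *ᵥ (fun _ => (1:ℝ)) = 0)
    (hpsd : ∀ v : Fin N → ℝ, 0 ≤ v ⬝ᵥ (L *ᵥ v))
    (lam : ℝ)
    (hlam : lam = sInf {r : ℝ | ∃ z : Fin N → ℝ,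
      z ⬝ᵥ (fun _ => (1:ℝ)) = 0 ∧ z ⬝ᵥ z = 1 ∧ r = z ⬝ᵥ (L *ᵥ z)})
    (hconn : 0 < lam)
    (γ1 γ2 V1 V2 ℓ1 ℓ2 : ℝ)
    (hγ1 : 0 < γ1) (hγ2 : 0 < γ2) (hV1 : 0 < V1) (hV2 : 0 < V2)
    (hℓ2 : 0 ≤ ℓ2)
    (g1 g2 : ℝ → ℝ)
    (hg1 : ∀ x y, |g1 x - g1 y| ≤ ℓ1 * |x - y|)
    (hg2 : ∀ x y, |g2 x - g2 y| ≤ ℓ2 * |x - y|)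
    (hcond : V1 * ℓ1 * V2 * ℓ2 / ((γ1 + lam) * γ2) < 1)
    (X : Fin N → ℝ)
    (heq : (γ1 • (1 : Matrix (Fin N) (Fin N) ℝ) + L) *ᵥ X =
      fun i => V1 * g2 ((V2 / γ2) * g1 (X i))) :
    ∃ c : ℝ, X = fun _ => c := by
  have hgap : ∀ z : Fin N → ℝ, z ⬝ᵥ (fun _ => (1 : ℝ)) = 0 → lam * (z ⬝ᵥ z) ≤ z ⬝ᵥ (L *ᵥ z) :=
    fun z hz => hlam ▸ sInf_rayleigh_mul_dotProduct_self_le hpsd hz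
  have hk : V1 * ℓ1 * (V2 / γ2) * ℓ2 < γ1 + lam := by
    rw [div_lt_one (by positivity), ← div_lt_iff₀ hγ2] at hcond
    calc V1 * ℓ1 * (V2 / γ2) * ℓ2 = V1 * ℓ1 * V2 * ℓ2 / γ2 := by ring
      _ < γ1 + lam := hcond
  exact exists_eq_const_of_lipschitz_lt_add hones hgap
    (abs_mul_comp_mul_comp_sub_le hV1.le (by positivity) hℓ2 hg1 hg2) hk heq

/-- If `V1 ℓ1 V2 ℓ2 / ((γ1 + λ₂) γ2) < 1`, every equilibrium
`(γ1 I + L) X̄1 = G̃(X̄1)` of the network is synchronized, i.e. lies in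
`span{𝟙}`. -/
theorem stmt_9 (N : ℕ) (L : Matrix (Fin N) (Fin N) ℝ)
    (hsymm : L.IsSymm)
    (hones : L *ᵥ (fun _ => (1:ℝ)) = 0)
    (hpsd : ∀ v : Fin N → ℝ, 0 ≤ v ⬝ᵥ (L *ᵥ v))
    (lam : ℝ)
    (hlam : lam = sInf {r : ℝ | ∃ z : Fin N → ℝ,
      z ⬝ᵥ (fun _ => (1:ℝ)) = 0 ∧ z ⬝ᵥ z = 1 ∧ r = z ⬝ᵥ (L *ᵥ z)})
    (hconn : 0 < lam)
    (γ1 γ2 V1 V2 ℓ1 ℓ2 : ℝ)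
    (hγ1 : 0 < γ1) (hγ2 : 0 < γ2) (hV1 : 0 < V1) (hV2 : 0 < V2)
    (hℓ1 : 0 ≤ ℓ1) (hℓ2 : 0 ≤ ℓ2)
    (g1 g2 : ℝ → ℝ)
    (hg1 : ∀ x y, |g1 x - g1 y| ≤ ℓ1 * |x - y|)
    (hg2 : ∀ x y, |g2 x - g2 y| ≤ ℓ2 * |x - y|)
    (hcond : V1 * ℓ1 * V2 * ℓ2 / ((γ1 + lam) * γ2) < 1)
    (X : Fin N → ℝ)
    (heq : (γ1 • (1 : Matrix (Fin N) (Fin N) ℝ) + L) *ᵥ X =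
      fun i => V1 * g2 ((V2 / γ2) * g1 (X i))) :
    ∃ c : ℝ, X = fun _ => c :=
  stmt_9_general N L hones hpsd lam hlam hconn γ1 γ2 V1 V2 ℓ1 ℓ2 hγ1 hγ2 hV1 hV2 hℓ2 g1 g2 hg1 hg2
    hcond X heq
end

section
/- Let g : ℝ → ℝ be the piecewise affine function g(x) = 0 for x < θ, g(x) = (x-θ)/δ for θ ≤ x ≤ θ+δ, g(x) = 1 for x > θ+δ, with θ, δ > 0. If V1·V2/(δ·γ1·γ2) > 1 + θ/δ (with γ1, γ2, V1, V2 > 0), then the planar system ẋ1 = -γ1·x1 + V1·x2, ẋ2 = -γ2·x2 + V2·g(x1) has exactly three equilibria: P_OFF = (0, 0), P_ON = (V1V2/(γ1γ2), V2/γ2), and the saddle point P_s = (x̄1, x̄2) with x̄2 = (V2θ/(δγ2))·(V1V2/(δγ1γ2) - 1)⁻¹ and x̄1 = (V1/γ1)·x̄2; in particular x̄1 satisfies θ < x̄1 < θ + δ and P_ON satisfies V1V2/(γ1γ2) > θ + δ. -/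
/-!
Eliminating `x₂ = (V₂/γ₂)·g(x₁)` reduces the equilibria to the fixed points of
`x ↦ a·g(x)` with `a = V₁V₂/(γ₁γ₂)`. Assumption 2 says exactly `a > θ + δ`, and then
this map has one fixed point on each piece of `g`: `0` where `g = 0`, `a` where `g = 1`,
and `aθ/(a - δ)` on the affine piece.
-/

open Set Function

noncomputable def rampSigmoid (θ δ x : ℝ) : ℝ :=
  if x < θ then 0 else if x ≤ θ + δ then (x - θ) / δ else 1

namespace rampSigmoid

variable {θ δ x : ℝ}

theorem of_lt (h : x < θ) : rampSigmoid θ δ x = 0 := if_pos h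

theorem of_mem_Icc (h : x ∈ Icc θ (θ + δ)) : rampSigmoid θ δ x = (x - θ) / δ := by
  rw [rampSigmoid, if_neg h.1.not_gt, if_pos h.2]

theorem of_gt (hδ : 0 ≤ δ) (h : θ + δ < x) : rampSigmoid θ δ x = 1 := by
  rw [rampSigmoid, if_neg (by linarith), if_neg h.not_ge]

theorem mul_div_sub_mem_Ioo (hθ : 0 < θ) (hδ : 0 < δ) {a : ℝ} (ha : θ + δ < a) :
    a * θ / (a - δ) ∈ Ioo θ (θ + δ) := by
  have hpos : 0 < a - δ := by linarith
  rw [mem_Ioo, lt_div_iff₀ hpos, div_lt_iff₀ hpos]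
  constructor <;> nlinarith

theorem fixedPoints_mul (hθ : 0 < θ) (hδ : 0 < δ) {a : ℝ} (ha : θ + δ < a) :
    fixedPoints (fun x ↦ a * rampSigmoid θ δ x) = {0, a, a * θ / (a - δ)} := by
  have hpos : a - δ ≠ 0 := by linarith
  have hmem := mul_div_sub_mem_Ioo hθ hδ ha
  ext x
  simp only [mem_fixedPoints, IsFixedPt, mem_insert_iff, mem_singleton_iff]
  constructor
  · intro hx
    rcases lt_or_ge x θ with h₁ | h₁
    · left
      rw [of_lt h₁, mul_zero] at hx
      exact hx.symm
    rcases le_or_gt x (θ + δ) with h₂ | h₂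
    · right; right
      rw [of_mem_Icc ⟨h₁, h₂⟩] at hx
      field_simp at hx ⊢
      linarith
    · right; left
      rw [of_gt hδ.le h₂, mul_one] at hx
      exact hx.symm
  · rintro (rfl | rfl | rfl)
    · rw [of_lt hθ, mul_zero]
    · rw [of_gt hδ.le ha, mul_one]
    · rw [of_mem_Icc (Ioo_subset_Icc_self hmem)]
      field_simp
      ring

end rampSigmoid

theorem equilibria_eq_image_fixedPoints {γ1 γ2 V1 V2 : ℝ} (hγ1 : γ1 ≠ 0) (hγ2 : γ2 ≠ 0)
    (g : ℝ → ℝ) :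
    {p : ℝ × ℝ | -γ1 * p.1 + V1 * p.2 = 0 ∧ -γ2 * p.2 + V2 * g p.1 = 0} =
      (fun x ↦ (x, V2 / γ2 * g x)) '' fixedPoints (fun x ↦ V1 * V2 / (γ1 * γ2) * g x) := by
  ext ⟨x1, x2⟩
  simp only [mem_ofPred_eq, mem_image, mem_fixedPoints, IsFixedPt, Prod.mk.injEq]
  constructor
  · rintro ⟨e1, e2⟩
    have hx2 : x2 = V2 / γ2 * g x1 := by field_simp; linarith
    refine ⟨x1, ?_, rfl, hx2.symm⟩
    subst hx2
    field_simp at e1 ⊢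
    linarith
  · rintro ⟨x, hx, rfl, rfl⟩
    constructor
    · field_simp at hx ⊢
      linarith
    · field_simp
      ring

theorem stmt_11_general (γ1 γ2 V1 V2 θ δ : ℝ)
    (hγ1 : 0 < γ1) (hγ2 : 0 < γ2)
    (hθ : 0 < θ) (hδ : 0 < δ)
    (hbist : V1 * V2 / (δ * γ1 * γ2) > 1 + θ / δ)
    (g : ℝ → ℝ)
    (hg : ∀ x, g x = if x < θ then 0 else if x ≤ θ + δ then (x - θ) / δ else 1)
    (xb2 xb1 : ℝ)
    (hxb2 : xb2 = (V2 * θ / (δ * γ2)) * (V1 * V2 / (δ * γ1 * γ2) - 1)⁻¹)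
    (hxb1 : xb1 = (V1 / γ1) * xb2) :
    {p : ℝ × ℝ | -γ1 * p.1 + V1 * p.2 = 0 ∧ -γ2 * p.2 + V2 * g p.1 = 0} =
      {((0:ℝ), (0:ℝ)), (V1 * V2 / (γ1 * γ2), V2 / γ2), (xb1, xb2)} ∧
    θ < xb1 ∧ xb1 < θ + δ ∧ θ + δ < V1 * V2 / (γ1 * γ2) := by
  set a := V1 * V2 / (γ1 * γ2) with ha_def
  have hK : V1 * V2 / (δ * γ1 * γ2) = a / δ := by rw [ha_def]; field_simp
  have ha : θ + δ < a := by
    have h : (θ + δ) / δ < a / δ := by rw [add_div, div_self hδ.ne', ← hK]; linarith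
    exact (div_lt_div_iff_of_pos_right hδ).1 h
  have hg' : g = rampSigmoid θ δ := funext hg
  have had : a - δ ≠ 0 := by linarith
  have hxb1' : xb1 = a * θ / (a - δ) := by
    rw [hxb1, hxb2, hK, ha_def]
    field_simp
  have hmem := rampSigmoid.mul_div_sub_mem_Ioo hθ hδ ha
  have hxb2' : xb2 = V2 / γ2 * rampSigmoid θ δ (a * θ / (a - δ)) := by
    rw [rampSigmoid.of_mem_Icc (Ioo_subset_Icc_self hmem), hxb2, hK]
    field_simp
    ring
  refine ⟨?_, hxb1' ▸ hmem.1, hxb1' ▸ hmem.2, ha⟩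
  rw [equilibria_eq_image_fixedPoints hγ1.ne' hγ2.ne', hg', rampSigmoid.fixedPoints_mul hθ hδ ha,
    image_insert_eq, image_insert_eq, image_singleton, rampSigmoid.of_lt hθ,
    rampSigmoid.of_gt hδ.le ha, mul_zero, mul_one, hxb1', hxb2']

/-- Under Assumption 2, the uncoupled piecewise affine bistable compartment
has exactly three equilibria: `P_OFF`, `P_ON` and the saddle `P_s`; the
saddle's first coordinate lies strictly inside the linear regime and `P_ON`
lies in the high-saturation regime. -/
theorem stmt_11 (γ1 γ2 V1 V2 θ δ : ℝ)
    (hγ1 : 0 < γ1) (hγ2 : 0 < γ2) (hV1 : 0 < V1) (hV2 : 0 < V2)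
    (hθ : 0 < θ) (hδ : 0 < δ)
    (hbist : V1 * V2 / (δ * γ1 * γ2) > 1 + θ / δ)
    (g : ℝ → ℝ)
    (hg : ∀ x, g x = if x < θ then 0 else if x ≤ θ + δ then (x - θ) / δ else 1)
    (xb2 xb1 : ℝ)
    (hxb2 : xb2 = (V2 * θ / (δ * γ2)) * (V1 * V2 / (δ * γ1 * γ2) - 1)⁻¹)
    (hxb1 : xb1 = (V1 / γ1) * xb2) :
    {p : ℝ × ℝ | -γ1 * p.1 + V1 * p.2 = 0 ∧ -γ2 * p.2 + V2 * g p.1 = 0} =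
      {((0:ℝ), (0:ℝ)), (V1 * V2 / (γ1 * γ2), V2 / γ2), (xb1, xb2)} ∧
    θ < xb1 ∧ xb1 < θ + δ ∧ θ + δ < V1 * V2 / (γ1 * γ2) :=
  stmt_11_general γ1 γ2 V1 V2 θ δ hγ1 hγ2 hθ hδ hbist g hg xb2 xb1 hxb2 hxb1
end

section
/- Let γ1, γ2, V1, V2, δ > 0 with V1·V2/(γ1·γ2·δ) > N, let L be a symmetric N×N Laplacian (PSD, L𝟙 = 0), and let M = [[-(γ1 I + L), V1 I], [(V2/δ)·D, -γ2 I]] with D = diag(w1,...,wN), wi ∈ {0,1}, not all wi zero. Then there exist arbitrarily small ε > 0 such that the Schur complement S_ε = -(γ1+ε)I - L + (V1V2/(δ(γ2+ε)))·D satisfies 𝟙ᵀ S_ε 𝟙 > 0; in particular S_ε, being symmetric, has a positive eigenvalue and hence is not Hurwitz. -/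
/-!
Since `L 𝟙 = 0`, the quadratic form of `S_ε` at `𝟙` is `-N (γ₁ + ε) + c(ε) n_α`, where
`c(ε) = V₁V₂ / (δ (γ₂ + ε))` and `n_α = ∑ wᵢ ≥ 1`. The instability criterion says exactly that
`N γ₁ < c(0)`, so by continuity `N (γ₁ + ε) < c(ε)` for all small `ε > 0`, and the form is
positive. A symmetric matrix with a positive value of its quadratic form has a positive
eigenvalue, because otherwise its negative would be positive semidefinite.
-/

open Matrix Filter Topology

theorem Matrix.IsHermitian.exists_pos_eigenvalue_of_dotProduct_mulVec_pos
    {n : Type*} [Fintype n] [DecidableEq n] {A : Matrix n n ℝ} (hA : A.IsHermitian)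
    {x : n → ℝ} (hx : 0 < x ⬝ᵥ (A *ᵥ x)) :
    ∃ μ : ℝ, 0 < μ ∧ ∃ v : n → ℝ, v ≠ 0 ∧ A *ᵥ v = μ • v := by
  by_contra! hA_nonpos
  have hnegA : (-A).PosSemidef := by
    refine hA.neg.posSemidef_iff_eigenvalues_nonneg.mpr fun i => ?_
    by_contra! hi
    have hv : ⇑(hA.neg.eigenvectorBasis i) ≠ 0 := fun h =>
      hA.neg.eigenvectorBasis.orthonormal.ne_zero i (by ext j; exact congrFun h j)
    refine hA_nonpos _ (neg_pos.mpr hi) _ hv ?_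
    rw [neg_smul, ← hA.neg.mulVec_eigenvectorBasis i, neg_mulVec, neg_neg]
  have hform := hnegA.dotProduct_mulVec_nonneg x
  rw [neg_mulVec, dotProduct_neg, star_trivial] at hform
  linarith

theorem exists_mem_Ioo_of_eventually_nhdsGT {P : ℝ → Prop} (hP : ∀ᶠ ε in 𝓝[>] 0, P ε)
    {ε₀ : ℝ} (hε₀ : 0 < ε₀) : ∃ ε, 0 < ε ∧ ε < ε₀ ∧ P ε := by
  obtain ⟨ε, hPε, hε⟩ := (hP.and (Ioo_mem_nhdsGT hε₀)).exists
  exact ⟨ε, hε.1, hε.2, hPε⟩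

theorem one_le_sum_of_forall_eq_zero_or_eq_one {ι : Type*} [Fintype ι] {w : ι → ℝ}
    (hw : ∀ i, w i = 0 ∨ w i = 1) (hw1 : ∃ i, w i = 1) : 1 ≤ ∑ i, w i := by
  obtain ⟨i, hi⟩ := hw1
  have hw_nonneg : ∀ j ∈ Finset.univ, 0 ≤ w j := fun j _ => by
    rcases hw j with h | h <;> simp [h]
  exact hi ▸ Finset.single_le_sum hw_nonneg (Finset.mem_univ i)

theorem ones_dotProduct_mulVec_ones_of_mulVec_ones_eq_zero
    {n : Type*} [Fintype n] [DecidableEq n] (a c : ℝ) {L : Matrix n n ℝ}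
    (hL : L *ᵥ (fun _ => (1 : ℝ)) = 0) (w : n → ℝ) :
    (fun _ => (1 : ℝ)) ⬝ᵥ ((-(a • (1 : Matrix n n ℝ)) - L + c • diagonal w) *ᵥ fun _ => 1) =
      -(Fintype.card n * a) + c * ∑ i, w i := by
  simp only [add_mulVec, sub_mulVec, neg_mulVec, smul_mulVec, one_mulVec, hL,
    dotProduct_add, dotProduct_sub, dotProduct_neg, dotProduct_smul]
  simp [dotProduct, mulVec_diagonal, Finset.mul_sum]
  ring

theorem isHermitian_neg_smul_one_sub_add_smul_diagonal
    {n : Type*} [Fintype n] [DecidableEq n] (a c : ℝ) {L : Matrix n n ℝ} (hL : L.IsSymm)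
    (w : n → ℝ) : (-(a • (1 : Matrix n n ℝ)) - L + c • diagonal w).IsHermitian := by
  rw [isHermitian_iff_isSymm]
  exact ((isSymm_one.smul a).neg.sub hL).add ((isSymm_diagonal w).smul c)

theorem eventually_mul_add_lt_div_mul_add {N γ1 γ2 V1 V2 δ : ℝ}
    (hγ1 : 0 < γ1) (hγ2 : 0 < γ2) (hδ : 0 < δ) (hcrit : V1 * V2 / (γ1 * γ2 * δ) > N) :
    ∀ᶠ ε in 𝓝[>] 0, N * (γ1 + ε) < V1 * V2 / (δ * (γ2 + ε)) := by
  have h0 : N * (γ1 + 0) < V1 * V2 / (δ * (γ2 + 0)) := by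
    rw [gt_iff_lt, lt_div_iff₀ (by positivity)] at hcrit
    rw [add_zero, add_zero, lt_div_iff₀ (by positivity)]
    linarith
  have hcont : ContinuousAt (fun ε : ℝ => V1 * V2 / (δ * (γ2 + ε)) - N * (γ1 + ε)) 0 := by
    fun_prop (disch := positivity)
  exact nhdsWithin_le_nhds ((hcont.eventually (lt_mem_nhds (sub_pos.mpr h0))).mono
    fun ε hε => sub_pos.mp hε)

theorem stmt_13_general (N : ℕ) (γ1 γ2 V1 V2 δ : ℝ)
    (hγ1 : 0 < γ1) (hγ2 : 0 < γ2) (hδ : 0 < δ)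
    (hcrit : V1 * V2 / (γ1 * γ2 * δ) > N)
    (L : Matrix (Fin N) (Fin N) ℝ)
    (hsymm : L.IsSymm)
    (hones : L *ᵥ (fun _ => (1:ℝ)) = 0)
    (w : Fin N → ℝ) (hw : ∀ i, w i = 0 ∨ w i = 1)
    (hw1 : ∃ i, w i = 1)
    (S : ℝ → Matrix (Fin N) (Fin N) ℝ)
    (hS : ∀ ε, S ε = -((γ1 + ε) • (1 : Matrix (Fin N) (Fin N) ℝ)) - L +
      (V1 * V2 / (δ * (γ2 + ε))) • Matrix.diagonal w) :
    ∀ ε0 > (0:ℝ), ∃ ε : ℝ, 0 < ε ∧ ε < ε0 ∧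
      0 < (fun _ => (1:ℝ)) ⬝ᵥ ((S ε) *ᵥ (fun _ => (1:ℝ))) ∧
      ∃ μ : ℝ, 0 < μ ∧ ∃ v : Fin N → ℝ, v ≠ 0 ∧ (S ε) *ᵥ v = μ • v := by
  intro ε0 hε0
  obtain ⟨ε, hε, hεε0, hgain⟩ :=
    exists_mem_Ioo_of_eventually_nhdsGT (eventually_mul_add_lt_div_mul_add hγ1 hγ2 hδ hcrit) hε0
  have hn_α := one_le_sum_of_forall_eq_zero_or_eq_one hw hw1
  have hform : 0 < (fun _ => (1:ℝ)) ⬝ᵥ ((S ε) *ᵥ (fun _ => (1:ℝ))) := by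
    rw [hS, ones_dotProduct_mulVec_ones_of_mulVec_ones_eq_zero _ _ hones, Fintype.card_fin]
    have hN : (0 : ℝ) ≤ N * (γ1 + ε) := by positivity
    nlinarith
  have hherm : (S ε).IsHermitian := by
    rw [hS]
    exact isHermitian_neg_smul_one_sub_add_smul_diagonal _ _ hsymm w
  exact ⟨ε, hε, hεε0, hform, hherm.exists_pos_eigenvalue_of_dotProduct_mulVec_pos hform⟩

/-- In a mixed or linear domain, if `V1 V2/(γ1 γ2 δ) > N`, then for
arbitrarily small `ε > 0` the Schur complement
`S_ε = -(γ1+ε) I - L + (V1V2/(δ(γ2+ε))) D` satisfies `𝟙ᵀ S_ε 𝟙 > 0`, and in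
particular has a positive eigenvalue (so it is not Hurwitz). -/
theorem stmt_13 (N : ℕ) (hN : 1 ≤ N) (γ1 γ2 V1 V2 δ : ℝ)
    (hγ1 : 0 < γ1) (hγ2 : 0 < γ2) (hV1 : 0 < V1) (hV2 : 0 < V2) (hδ : 0 < δ)
    (hcrit : V1 * V2 / (γ1 * γ2 * δ) > N)
    (L : Matrix (Fin N) (Fin N) ℝ)
    (hsymm : L.IsSymm)
    (hpsd : ∀ v : Fin N → ℝ, 0 ≤ v ⬝ᵥ (L *ᵥ v))
    (hones : L *ᵥ (fun _ => (1:ℝ)) = 0)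
    (w : Fin N → ℝ) (hw : ∀ i, w i = 0 ∨ w i = 1)
    (hw1 : ∃ i, w i = 1)
    (S : ℝ → Matrix (Fin N) (Fin N) ℝ)
    (hS : ∀ ε, S ε = -((γ1 + ε) • (1 : Matrix (Fin N) (Fin N) ℝ)) - L +
      (V1 * V2 / (δ * (γ2 + ε))) • Matrix.diagonal w) :
    ∀ ε0 > (0:ℝ), ∃ ε : ℝ, 0 < ε ∧ ε < ε0 ∧
      0 < (fun _ => (1:ℝ)) ⬝ᵥ ((S ε) *ᵥ (fun _ => (1:ℝ))) ∧
      ∃ μ : ℝ, 0 < μ ∧ ∃ v : Fin N → ℝ, v ≠ 0 ∧ (S ε) *ᵥ v = μ • v :=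
  stmt_13_general N γ1 γ2 V1 V2 δ hγ1 hγ2 hδ hcrit L hsymm hones w hw hw1 S hS
end

section
/- Assume V1, V2, γ1, γ2, θ, δ, k > 0, N ≥ 2, and set V = V1V2/(γ1γ2). Let X̄1 ∈ ℝᴺ be an equilibrium vector satisfying, for an all-to-all coupled network, x̄_{1,i} = γ1·V/(Nk+γ1) + V·Nk·q̄/(Nk+γ1) for i in a set of cardinality m and x̄_{1,i} = V·Nk·q̄/(Nk+γ1) for the remaining N−m indices, with q̄ = m/N, 1 ≤ m ≤ N−1 and θ < V·q̄ < θ+δ. If k ≥ min{γ1(θ+δ−V)/(N(Vq̄−(θ+δ))), θγ1/(N(Vq̄−θ))} (interpreting the first bound as unsatisfiable when θ+δ < V), then it is impossible that simultaneously γ1·V/(Nk+γ1) + V·Nk·q̄/(Nk+γ1) > θ+δ and V·Nk·q̄/(Nk+γ1) < θ. That is, the saturated-domain membership conditions fail. -/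
/-!
Clearing the positive denominator `N k + γ₁`, the ON condition becomes
`N k (θ + δ - V q̄) < γ₁ (V - (θ + δ))` and the OFF condition `N k (V q̄ - θ) < θ γ₁`.
Since `θ < V q̄ < θ + δ`, each threshold bound on `k` is, after multiplying out its
denominator, exactly the negation of one of these linear inequalities.
-/

/-- The equilibrium value `x̄₁,ᵢ` of an ON compartment, with `V = V₁V₂/(γ₁γ₂)` and `q = q̄`. -/
noncomputable def onLevel (N k γ V q : ℝ) : ℝ := γ * V / (N * k + γ) + V * (N * k) * q / (N * k + γ)

noncomputable def offLevel (N k γ V q : ℝ) : ℝ := V * (N * k) * q / (N * k + γ)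

section

variable {N k γ V q θ δ : ℝ}

theorem lt_onLevel_iff (hD : 0 < N * k + γ) (c : ℝ) :
    c < onLevel N k γ V q ↔ N * k * (c - V * q) < γ * (V - c) := by
  rw [onLevel, ← add_div, lt_div_iff₀ hD]
  constructor <;> intro h <;> linarith

theorem offLevel_lt_iff (hD : 0 < N * k + γ) :
    offLevel N k γ V q < θ ↔ N * k * (V * q - θ) < θ * γ := by
  rw [offLevel, div_lt_iff₀ hD]
  constructor <;> intro h <;> linarith

theorem not_lt_onLevel_of_threshold_le (hD : 0 < N * k + γ) (hN : 0 < N)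
    (hq : V * q < θ + δ) (hk : γ * ((θ + δ) - V) / (N * (V * q - (θ + δ))) ≤ k) :
    ¬ θ + δ < onLevel N k γ V q := by
  have hneg : N * (V * q - (θ + δ)) < 0 := mul_neg_of_pos_of_neg hN (by linarith)
  rw [div_le_iff_of_neg hneg] at hk
  rw [lt_onLevel_iff hD]
  linarith

theorem not_offLevel_lt_of_threshold_le (hD : 0 < N * k + γ) (hN : 0 < N)
    (hq : θ < V * q) (hk : θ * γ / (N * (V * q - θ)) ≤ k) :
    ¬ offLevel N k γ V q < θ := by
  have hpos : 0 < N * (V * q - θ) := mul_pos hN (by linarith)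
  rw [div_le_iff₀ hpos] at hk
  rw [offLevel_lt_iff hD]
  linarith

end

theorem stmt_15_general (γ1 θ δ k : ℝ) (N : ℕ)
    (hγ1 : 0 < γ1) (hk : 0 < k) (hN : 2 ≤ N) (V q : ℝ)
    (hq1 : θ < V * q) (hq2 : V * q < θ + δ)
    (hkbig : min (γ1 * ((θ + δ) - V) / ((N : ℝ) * (V * q - (θ + δ))))
                 (θ * γ1 / ((N : ℝ) * (V * q - θ))) ≤ k) :
    ¬ (θ + δ < γ1 * V / ((N : ℝ) * k + γ1) +
          V * ((N : ℝ) * k) * q / ((N : ℝ) * k + γ1) ∧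
       V * ((N : ℝ) * k) * q / ((N : ℝ) * k + γ1) < θ) := by
  change ¬ (θ + δ < onLevel N k γ1 V q ∧ offLevel N k γ1 V q < θ)
  have hNpos : (0 : ℝ) < N := Nat.cast_pos.mpr (by omega)
  have hD : (0 : ℝ) < N * k + γ1 := by positivity
  rintro ⟨hon, hoff⟩
  rcases min_le_iff.mp hkbig with h | h
  · exact not_lt_onLevel_of_threshold_le hD hNpos hq2 h hon
  · exact not_offLevel_lt_of_threshold_le hD hNpos hq1 h hoff

/-- If `k` exceeds the minimum of the two thresholds `k₁^q̄, k₂^q̄`, then the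
saturated-domain membership conditions for an equilibrium with average
activation `q̄ = m/N`, `θ < V q̄ < θ + δ`, cannot both hold. -/
theorem stmt_15 (V1 V2 γ1 γ2 θ δ k : ℝ) (N m : ℕ)
    (hV1 : 0 < V1) (hV2 : 0 < V2) (hγ1 : 0 < γ1) (hγ2 : 0 < γ2)
    (hθ : 0 < θ) (hδ : 0 < δ) (hk : 0 < k)
    (hN : 2 ≤ N) (hm1 : 1 ≤ m) (hm2 : m ≤ N - 1)
    (V q : ℝ) (hV : V = V1 * V2 / (γ1 * γ2)) (hq : q = (m : ℝ) / N)
    (hq1 : θ < V * q) (hq2 : V * q < θ + δ)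
    (hkbig : min (γ1 * ((θ + δ) - V) / ((N : ℝ) * (V * q - (θ + δ))))
                 (θ * γ1 / ((N : ℝ) * (V * q - θ))) ≤ k) :
    ¬ (θ + δ < γ1 * V / ((N : ℝ) * k + γ1) +
          V * ((N : ℝ) * k) * q / ((N : ℝ) * k + γ1) ∧
       V * ((N : ℝ) * k) * q / ((N : ℝ) * k + γ1) < θ) :=
  stmt_15_general γ1 θ δ k N hγ1 hk hN V q hq1 hq2 hkbig
end
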